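/- Let k ∈ [0,1), λ > 0 and s ≥ 1. If y₀ : [s,∞) → ℝ is twice continuously differentiable with y₀''(t) = λ² t^{−2k} y₀(t) for all t ≥ s, y₀(s) = 1 and y₀'(s) = 0, then y₀(t) ≥ cosh(λ(φ_k(t) − φ_k(s))) for all t ≥ s. -/

import Mathlib

open MeasureTheory Real Set

/-- `φ_k(t) = t^(1-k)/(1-k)`. -/
noncomputable def phik (k t : ℝ) : ℝ := t ^ (1 - k) / (1 - k)

/-- `A_k(t) = φ_k(t) - φ_k(1)`. -/
noncomputable def Ak (k t : ℝ) : ℝ := phik k t - phik k 1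

/-!
Write `a(t) = λ (φ_k(t) - φ_k(s))` and `z = cosh ∘ a`. Since `a' = λ t^(-k)`, one computes
`z'' = λ² t^(-2k) z - λ k t^(-k-1) sinh a`, so `z` is a subsolution of the equation `y₀` solves.
The solution `y₀` stays positive (it is convex as long as it is positive, and starts at `1` with
slope `0`), hence the Wronskian `W = y₀' z - y₀ z'` has `W' = y₀'' z - y₀ z'' ≥ 0` and `W(s) = 0`.
Therefore `(y₀ / z)' = W / z² ≥ 0`, and `y₀ / z ≥ y₀(s) / z(s) = 1`.
-/

lemma monotoneOn_Icc_of_hasDerivAt_nonneg {f f' : ℝ → ℝ} {a b : ℝ}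
    (hf : ∀ x ∈ Icc a b, HasDerivAt f (f' x) x) (hf' : ∀ x ∈ Ioo a b, 0 ≤ f' x) :
    MonotoneOn f (Icc a b) := by
  refine monotoneOn_of_hasDerivWithinAt_nonneg (convex_Icc a b)
    (fun x hx => (hf x hx).continuousAt.continuousWithinAt) (fun x hx => ?_) (by rwa [interior_Icc])
  rw [interior_Icc] at hx ⊢
  exact (hf x (Ioo_subset_Icc_self hx)).hasDerivWithinAt

lemma le_of_deriv_left_nonneg_of_deriv2_nonneg {y y' y'' : ℝ → ℝ} {s t : ℝ} (hst : s ≤ t)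
    (hy : ∀ u ∈ Icc s t, HasDerivAt y (y' u) u) (hy' : ∀ u ∈ Icc s t, HasDerivAt y' (y'' u) u)
    (hy'' : ∀ u ∈ Ioo s t, 0 ≤ y'' u) (hy's : 0 ≤ y' s) : y s ≤ y t := by
  have hslope : MonotoneOn y' (Icc s t) := monotoneOn_Icc_of_hasDerivAt_nonneg hy' hy''
  refine monotoneOn_Icc_of_hasDerivAt_nonneg hy (fun u hu => ?_) (left_mem_Icc.2 hst)
    (right_mem_Icc.2 hst) hst
  exact hy's.trans (hslope (left_mem_Icc.2 hst) (Ioo_subset_Icc_self hu) hu.1.le)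

lemma pos_of_hasDerivAt_deriv_eq_mul_self {y y' q : ℝ → ℝ} {s : ℝ}
    (hy : ∀ u, s ≤ u → HasDerivAt y (y' u) u) (hy' : ∀ u, s ≤ u → HasDerivAt y' (q u * y u) u)
    (hq : ∀ u, s ≤ u → 0 ≤ q u) (hys : 0 < y s) (hy's : 0 ≤ y' s) :
    ∀ t, s ≤ t → 0 < y t := by
  intro T hsT
  by_contra! hT
  set K := Icc s T ∩ y ⁻¹' Iic 0
  have hyc : ContinuousOn y (Icc s T) := fun u hu => (hy u hu.1).continuousAt.continuousWithinAt
  have hK : IsCompact K := isCompact_Icc.of_isClosed_subset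
    (hyc.preimage_isClosed_of_isClosed isClosed_Icc isClosed_Iic) inter_subset_left
  obtain ⟨t₁, ⟨⟨hst₁, ht₁T⟩, hyt₁⟩, ht₁min⟩ := hK.exists_isLeast ⟨T, ⟨hsT, le_rfl⟩, hT⟩
  have hypos : ∀ u ∈ Ioo s t₁, 0 < y u := fun u hu => by
    by_contra! hyu
    exact (ht₁min ⟨⟨hu.1.le, hu.2.le.trans ht₁T⟩, hyu⟩).not_gt hu.2
  have := le_of_deriv_left_nonneg_of_deriv2_nonneg hst₁ (fun u hu => hy u hu.1)
    (fun u hu => hy' u hu.1) (fun u hu => mul_nonneg (hq u hu.1.le) (hypos u hu).le) hy's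
  exact (hys.trans_le this).not_ge hyt₁

lemma div_le_div_of_wronskian_nonneg {y y' y'' z z' z'' : ℝ → ℝ} {s t : ℝ} (hst : s ≤ t)
    (hy : ∀ u ∈ Icc s t, HasDerivAt y (y' u) u) (hy' : ∀ u ∈ Icc s t, HasDerivAt y' (y'' u) u)
    (hz : ∀ u ∈ Icc s t, HasDerivAt z (z' u) u) (hz' : ∀ u ∈ Icc s t, HasDerivAt z' (z'' u) u)
    (hz0 : ∀ u ∈ Icc s t, 0 < z u) (hcomp : ∀ u ∈ Ioo s t, y u * z'' u ≤ y'' u * z u)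
    (hW : 0 ≤ y' s * z s - y s * z' s) : y s / z s ≤ y t / z t := by
  set W := fun u => y' u * z u - y u * z' u
  have hWmono : MonotoneOn W (Icc s t) := by
    refine monotoneOn_Icc_of_hasDerivAt_nonneg (f' := fun u => y'' u * z u - y u * z'' u)
      (fun u hu => ?_) (fun u hu => sub_nonneg.2 (hcomp u hu))
    exact (((hy' u hu).mul (hz u hu)).sub ((hy u hu).mul (hz' u hu))).congr_deriv (by ring)
  refine monotoneOn_Icc_of_hasDerivAt_nonneg (f := fun u => y u / z u)
    (f' := fun u => W u / z u ^ 2) (fun u hu => ?_)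
    (fun u hu => div_nonneg (hW.trans (hWmono (left_mem_Icc.2 hst) (Ioo_subset_Icc_self hu)
      hu.1.le)) (sq_nonneg _)) (left_mem_Icc.2 hst) (right_mem_Icc.2 hst) hst
  exact (hy u hu).div (hz u hu) (hz0 u hu).ne'

lemma hasDerivAt_phik {k u : ℝ} (hk : k < 1) (hu : 0 < u) :
    HasDerivAt (phik k) (u ^ (-k)) u := by
  have h := (hasDerivAt_rpow_const (p := 1 - k) (Or.inl hu.ne')).div_const (1 - k)
  rw [show 1 - k - 1 = -k by ring, mul_div_cancel_left₀ _ (by linarith : 1 - k ≠ 0)] at h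
  exact h

lemma phik_le_phik {k a b : ℝ} (hk : k < 1) (ha : 0 ≤ a) (hab : a ≤ b) : phik k a ≤ phik k b :=
  div_le_div_of_nonneg_right (rpow_le_rpow ha hab (by linarith)) (by linarith)

section cosh_phik

variable {k u : ℝ} (lam c : ℝ)

lemma hasDerivAt_cosh_phik (hk : k < 1) (hu : 0 < u) :
    HasDerivAt (fun x => cosh (lam * (phik k x - c)))
      (lam * u ^ (-k) * sinh (lam * (phik k u - c))) u :=
  (((hasDerivAt_phik hk hu).sub_const c).const_mul lam).cosh.congr_deriv (by ring)

lemma hasDerivAt_rpow_mul_sinh_phik (hk : k < 1) (hu : 0 < u) :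
    HasDerivAt (fun x => lam * x ^ (-k) * sinh (lam * (phik k x - c)))
      (lam ^ 2 * u ^ (-(2 * k)) * cosh (lam * (phik k u - c))
        - lam * k * u ^ (-k - 1) * sinh (lam * (phik k u - c))) u := by
  have hsinh := (((hasDerivAt_phik hk hu).sub_const c).const_mul lam).sinh
  have hrpow := (hasDerivAt_rpow_const (p := -k) (Or.inl hu.ne')).const_mul lam
  refine (hrpow.mul hsinh).congr_deriv ?_
  rw [show -(2 * k) = -k + -k by ring, rpow_add hu]
  ring

lemma mul_deriv2_cosh_phik_le {y : ℝ} (hk : k ∈ Ico 0 1) (hlam : 0 ≤ lam) (hu : 0 < u)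
    (hy : 0 ≤ y) (hc : c ≤ phik k u) :
    y * (lam ^ 2 * u ^ (-(2 * k)) * cosh (lam * (phik k u - c))
      - lam * k * u ^ (-k - 1) * sinh (lam * (phik k u - c)))
      ≤ lam ^ 2 * u ^ (-(2 * k)) * y * cosh (lam * (phik k u - c)) := by
  have hsinh : 0 ≤ sinh (lam * (phik k u - c)) :=
    sinh_nonneg_iff.2 (mul_nonneg hlam (sub_nonneg.2 hc))
  have := hk.1
  have : 0 ≤ y * (lam * k * u ^ (-k - 1) * sinh (lam * (phik k u - c))) := by positivity
  linarith

end cosh_phik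

theorem y0_lower_bound_general
    (k : ℝ) (hk : k ∈ Set.Ico (0:ℝ) 1) (lam : ℝ) (hlam : 0 < lam)
    (s : ℝ) (hs : 1 ≤ s)
    (y₀ : ℝ → ℝ)
    (hyd : ∀ t : ℝ, s ≤ t → DifferentiableAt ℝ y₀ t)
    (hyd2 : ∀ t : ℝ, s ≤ t → DifferentiableAt ℝ (deriv y₀) t)
    (hode : ∀ t : ℝ, s ≤ t → deriv (deriv y₀) t = lam^2 * t ^ (-(2*k)) * y₀ t)
    (hy0 : y₀ s = 1) (hy0' : deriv y₀ s = 0) :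
    ∀ t : ℝ, s ≤ t → Real.cosh (lam * (phik k t - phik k s)) ≤ y₀ t := by
  intro t hst
  have hpos : ∀ u, s ≤ u → 0 < u := fun u hu => by linarith
  have hy : ∀ u, s ≤ u → HasDerivAt y₀ (deriv y₀ u) u := fun u hu => (hyd u hu).hasDerivAt
  have hy' : ∀ u, s ≤ u → HasDerivAt (deriv y₀) (lam ^ 2 * u ^ (-(2 * k)) * y₀ u) u :=
    fun u hu => hode u hu ▸ (hyd2 u hu).hasDerivAt
  have hy₀pos := pos_of_hasDerivAt_deriv_eq_mul_self hy hy'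
    (fun u hu => by have := hpos u hu; positivity) (by rw [hy0]; norm_num) hy0'.ge
  have key := div_le_div_of_wronskian_nonneg hst (fun u hu => hy u hu.1) (fun u hu => hy' u hu.1)
    (fun u hu => hasDerivAt_cosh_phik lam (phik k s) hk.2 (hpos u hu.1))
    (fun u hu => hasDerivAt_rpow_mul_sinh_phik lam (phik k s) hk.2 (hpos u hu.1))
    (fun u _ => cosh_pos _)
    (fun u hu => mul_deriv2_cosh_phik_le lam (phik k s) hk hlam.le (hpos u hu.1.le)
      (hy₀pos u hu.1.le).le (phik_le_phik hk.2 (hpos s le_rfl).le hu.1.le))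
    (by simp [hy0, hy0'])
  rwa [hy0, sub_self, mul_zero, cosh_zero, div_one, one_le_div (cosh_pos _)] at key

/-- Lower bound for the solution `y₀` of `y'' = λ² t^(-2k) y`, `y(s) = 1`, `y'(s) = 0`. -/
theorem y0_lower_bound
    (k : ℝ) (hk : k ∈ Set.Ico (0:ℝ) 1) (lam : ℝ) (hlam : 0 < lam)
    (s : ℝ) (hs : 1 ≤ s)
    (y₀ : ℝ → ℝ)
    (hyd : ∀ t : ℝ, s ≤ t → DifferentiableAt ℝ y₀ t)
    (hyd2 : ∀ t : ℝ, s ≤ t → DifferentiableAt ℝ (deriv y₀) t)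
    (hyc2 : ContinuousOn (deriv (deriv y₀)) (Set.Ici s))
    (hode : ∀ t : ℝ, s ≤ t → deriv (deriv y₀) t = lam^2 * t ^ (-(2*k)) * y₀ t)
    (hy0 : y₀ s = 1) (hy0' : deriv y₀ s = 0) :
    ∀ t : ℝ, s ≤ t → Real.cosh (lam * (phik k t - phik k s)) ≤ y₀ t :=
  y0_lower_bound_general k hk lam hlam s hs y₀ hyd hyd2 hode hy0 hy0'
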